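/- The map T ↦ M_T from Tr(ℕ) (trees on ℕ with the topology inherited from 2^{ℕ^{<ℕ}}) into the hyperspace K(2^ℕ) with the Vietoris topology is continuous. -/

import Mathlib

/-- A tree on `ℕ⁺` (positive naturals): a set of finite sequences closed under initial
segments. -/
def IsTree (T : Set (List ℕ+)) : Prop :=
  ∀ l ∈ T, ∀ l' : List ℕ+, l' <+: l → l' ∈ T

/-- The infinite branches `[T]` of a tree `T`. -/
def branches (T : Set (List ℕ+)) : Set (ℕ → ℕ+) :=
  {σ | ∀ k : ℕ, (List.ofFn fun i : Fin k => σ i) ∈ T}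

/-- `ν̃` for a finite sequence `ν = (n₁, …, nₖ)`: the set `{n₁, n₁+n₂, …, n₁+⋯+nₖ}` of its
partial sums. -/
def partialSums (ν : List ℕ+) : Set ℕ :=
  {s | ∃ k < ν.length, s = ((ν.take (k + 1)).map (fun p : ℕ+ => (p : ℕ))).sum}

/-- `ν̃` for an infinite sequence `ν = (n₁, n₂, …)`: the set `{n₁, n₁+n₂, …}`. -/
def partialSumsInf (ν : ℕ → ℕ+) : Set ℕ :=
  {s | ∃ k : ℕ, s = ∑ i ∈ Finset.range (k + 1), (ν i : ℕ)}

/-- Indicator function of a set of naturals, as an element of the Cantor space. -/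
noncomputable def setToBool (A : Set ℕ) : ℕ → Bool := fun n => decide (n ∈ A) (h := Classical.dec _)

/-- `M_T = { ν̃ : ν ∈ T ∪ [T] or |ν| ≤ 3 }`, as a collection of subsets of `ℕ` coded as
elements of Cantor space. -/
noncomputable def MT (T : Set (List ℕ+)) : Set (ℕ → Bool) :=
  (fun ν : List ℕ+ => setToBool (partialSums ν)) '' {ν | ν ∈ T ∨ ν.length ≤ 3} ∪
  (fun ν : ℕ → ℕ+ => setToBool (partialSumsInf ν)) '' branches T
/-- The space of trees on `ℕ⁺`, as a subspace of `2^{(ℕ⁺)^{<ℕ}}`. -/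
abbrev TreeSpace : Type :=
  {T : List ℕ+ → Bool // ∀ l l' : List ℕ+, T l = true → l' <+: l → T l' = true}

/-- The basic clopen cylinder `Δ_η` of the Cantor space determined by a finite binary
string `η`. -/
def cyl (η : List Bool) : Set (ℕ → Bool) :=
  {σ | ∀ i : Fin η.length, σ i = η.get i}

/-- The Vietoris-type topology on collections of subsets of Cantor space, generated by the
sets `{M : M ∩ Δ_η ≠ ∅}` and their complements. -/
def vietorisTop : TopologicalSpace (Set (ℕ → Bool)) :=
  TopologicalSpace.generateFrom
    ({S | ∃ η : List Bool, S = {M : Set (ℕ → Bool) | (M ∩ cyl η).Nonempty}} ∪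
     {S | ∃ η : List Bool, S = {M : Set (ℕ → Bool) | M ∩ cyl η = ∅}})

/-! Whether `ν̃ ∈ Δ_η` depends only on `ν̃ ∩ [0, |η|)`, which is also `ν'̃ ∩ [0, |η|)` for the
longest prefix `ν'` of `ν` whose partial sums stay below `|η|`; for a branch of `T` one first
passes to its prefix of length `|η|`. As `T` is a tree, `ν' ∈ T` whenever `ν ∈ T`. So, besides
the contribution of the sequences of length `≤ 3`, which does not depend on `T`,
`{T : M_T ∩ Δ_η ≠ ∅}` is the union of the clopen sets `{T : ν ∈ T}` over the finitely many `ν`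
with sum `≤ |η|` and `ν̃ ∈ Δ_η`. Hence the preimages of all subbasic open sets are clopen. -/

open Set

def natSum (l : List ℕ+) : ℕ := (l.map (fun p : ℕ+ => (p : ℕ))).sum

@[simp] lemma natSum_nil : natSum [] = 0 := rfl

@[simp] lemma natSum_cons (a : ℕ+) (l : List ℕ+) : natSum (a :: l) = a + natSum l := by
  simp [natSum]

lemma mem_partialSums {l : List ℕ+} {s : ℕ} :
    s ∈ partialSums l ↔ ∃ k < l.length, s = natSum (l.take (k + 1)) := Iff.rfl

lemma length_le_natSum (l : List ℕ+) : l.length ≤ natSum l := by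
  induction l with
  | nil => simp
  | cons a l ih => simp only [natSum_cons, List.length_cons]; have := a.pos; omega

lemma le_natSum_of_mem {l : List ℕ+} {p : ℕ+} (h : p ∈ l) : (p : ℕ) ≤ natSum l :=
  List.single_le_sum (fun _ _ => Nat.zero_le _) _ (List.mem_map_of_mem h)

lemma partialSums_nil : partialSums [] = ∅ := by
  simp [partialSums]

lemma mem_partialSums_cons {a : ℕ+} {l : List ℕ+} {s : ℕ} :
    s ∈ partialSums (a :: l) ↔ s = a ∨ ∃ t ∈ partialSums l, s = a + t := by
  simp only [mem_partialSums, List.length_cons]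
  constructor
  · rintro ⟨_ | k, hk, rfl⟩
    · simp
    · exact Or.inr ⟨_, ⟨k, by omega, rfl⟩, by simp⟩
  · rintro (rfl | ⟨_, ⟨k, hk, rfl⟩, rfl⟩)
    · exact ⟨0, by omega, by simp⟩
    · exact ⟨k + 1, by omega, by simp⟩

def truncBelow : ℕ → List ℕ+ → List ℕ+
  | _, [] => []
  | N, a :: l => if (a : ℕ) < N then a :: truncBelow (N - a) l else []

lemma truncBelow_prefix (N : ℕ) (l : List ℕ+) : truncBelow N l <+: l := by
  induction l generalizing N with
  | nil => simp [truncBelow]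
  | cons a l ih =>
    unfold truncBelow
    split_ifs
    · exact (List.prefix_cons_inj a).2 (ih _)
    · exact List.nil_prefix

lemma natSum_truncBelow_le (N : ℕ) (l : List ℕ+) : natSum (truncBelow N l) ≤ N := by
  induction l generalizing N with
  | nil => simp [truncBelow]
  | cons a l ih =>
    unfold truncBelow
    split_ifs with ha
    · have := ih (N - a); simp only [natSum_cons]; omega
    · simp

lemma mem_partialSums_truncBelow {N i : ℕ} (hi : i < N) (l : List ℕ+) :
    i ∈ partialSums (truncBelow N l) ↔ i ∈ partialSums l := by
  induction l generalizing N i with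
  | nil => simp [truncBelow]
  | cons a l ih =>
    unfold truncBelow
    split_ifs with ha
    · simp only [mem_partialSums_cons]
      refine or_congr Iff.rfl ⟨?_, ?_⟩ <;> rintro ⟨t, ht, rfl⟩
      · exact ⟨t, (ih (by omega)).1 ht, rfl⟩
      · exact ⟨t, (ih (by omega)).2 ht, rfl⟩
    · simp only [partialSums_nil, mem_empty_iff_false, false_iff, mem_partialSums_cons]
      omega

lemma natSum_ofFn (σ : ℕ → ℕ+) (k : ℕ) :
    natSum (List.ofFn fun j : Fin k => σ j) = ∑ j ∈ Finset.range k, (σ j : ℕ) := by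
  simp [natSum, List.sum_ofFn, Fin.sum_univ_eq_sum_range (fun j => (σ j : ℕ))]

lemma take_ofFn_of_le (σ : ℕ → ℕ+) {N k : ℕ} (hk : k ≤ N) :
    (List.ofFn fun j : Fin N => σ j).take k = List.ofFn fun j : Fin k => σ j :=
  List.ext_getElem (by simp; omega) (by simp)

lemma mem_partialSumsInf_iff_mem_partialSums_ofFn (σ : ℕ → ℕ+) {N i : ℕ} (hi : i < N) :
    i ∈ partialSumsInf σ ↔ i ∈ partialSums (List.ofFn fun j : Fin N => σ j) := by
  rw [mem_partialSums, List.length_ofFn]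
  constructor
  · rintro ⟨k, rfl⟩
    have hk : k + 1 ≤ ∑ j ∈ Finset.range (k + 1), (σ j : ℕ) := by
      have := length_le_natSum (List.ofFn fun j : Fin (k + 1) => σ j)
      rwa [List.length_ofFn, natSum_ofFn] at this
    exact ⟨k, by omega, by rw [take_ofFn_of_le σ (by omega), natSum_ofFn]⟩
  · rintro ⟨k, hk, rfl⟩
    exact ⟨k, by rw [take_ofFn_of_le σ hk, natSum_ofFn]⟩

lemma setToBool_mem_cyl_congr {η : List Bool} {A B : Set ℕ}
    (h : ∀ i < η.length, (i ∈ A ↔ i ∈ B)) : setToBool A ∈ cyl η ↔ setToBool B ∈ cyl η := by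
  have hAB : ∀ i : Fin η.length, setToBool A i = setToBool B i := fun i => by
    simp only [setToBool, decide_eq_decide]; exact h i i.2
  simp only [cyl, mem_ofPred_eq, hAB]

lemma finite_setOf_natSum_le (N : ℕ) : {l : List ℕ+ | natSum l ≤ N}.Finite := by
  let S := {p : ℕ+ | (p : ℕ) ≤ N}
  have : Finite S := ((finite_le_nat N).preimage PNat.coe_injective.injOn).to_subtype
  refine ((List.finite_length_le S N).image (List.map Subtype.val)).subset fun l hl => ?_
  lift l to List S using fun p hp => (le_natSum_of_mem hp).trans hl
  refine ⟨l, ?_, rfl⟩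
  simpa using (length_le_natSum _).trans hl

lemma isClopen_setOf_apply (ν : List ℕ+) : IsClopen {T : TreeSpace | T.1 ν = true} :=
  (isClopen_discrete {true}).preimage ((continuous_apply ν).comp continuous_subtype_val)

lemma MT_inter_cyl_nonempty_iff {T : Set (List ℕ+)} (hT : IsTree T) (η : List Bool) :
    (MT T ∩ cyl η).Nonempty ↔
      (∃ ν : List ℕ+, ν.length ≤ 3 ∧ setToBool (partialSums ν) ∈ cyl η) ∨
      ∃ ν ∈ T, natSum ν ≤ η.length ∧ setToBool (partialSums ν) ∈ cyl η := by
  have truncate : ∀ ν ∈ T, setToBool (partialSums ν) ∈ cyl η →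
      ∃ ν ∈ T, natSum ν ≤ η.length ∧ setToBool (partialSums ν) ∈ cyl η := fun ν hν hη =>
    ⟨_, hT ν hν _ (truncBelow_prefix η.length ν), natSum_truncBelow_le _ _,
      (setToBool_mem_cyl_congr fun _ hi => mem_partialSums_truncBelow hi ν).2 hη⟩
  constructor
  · rintro ⟨_, ⟨ν, hν | h3, rfl⟩ | ⟨σ, hσ, rfl⟩, hη⟩
    · exact Or.inr (truncate ν hν hη)
    · exact Or.inl ⟨ν, h3, hη⟩
    · exact Or.inr (truncate _ (hσ η.length)
        ((setToBool_mem_cyl_congr fun _ hi =>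
          mem_partialSumsInf_iff_mem_partialSums_ofFn σ hi).1 hη))
  · rintro (⟨ν, h3, hη⟩ | ⟨ν, hν, -, hη⟩)
    · exact ⟨_, Or.inl ⟨ν, Or.inr h3, rfl⟩, hη⟩
    · exact ⟨_, Or.inl ⟨ν, Or.inl hν, rfl⟩, hη⟩

lemma isClopen_setOf_MT_inter_cyl_nonempty (η : List Bool) :
    IsClopen {T : TreeSpace | (MT {l | T.1 l = true} ∩ cyl η).Nonempty} := by
  have hTree (T : TreeSpace) : IsTree {l | T.1 l = true} := fun l hl l' h => T.2 l l' hl h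
  have hF := (finite_setOf_natSum_le η.length).subset
    (inter_subset_left : {ν | natSum ν ≤ η.length} ∩ {ν | setToBool (partialSums ν) ∈ cyl η} ⊆ _)
  have hShort : IsClopen {_T : TreeSpace |
      ∃ ν : List ℕ+, ν.length ≤ 3 ∧ setToBool (partialSums ν) ∈ cyl η} :=
    ⟨isClosed_const, isOpen_const⟩
  convert hShort.union
    (hF.isClopen_biUnion fun ν _ => isClopen_setOf_apply ν) using 1
  ext T
  simp [MT_inter_cyl_nonempty_iff (hTree T), and_comm]

/-- The map `T ↦ M_T` from the space of trees on `ℕ⁺` into the hyperspace `K(2^ℕ)` (with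
the Vietoris topology, generated by the sets `{M : M ∩ Δ_η ≠ ∅}` and their complements)
is continuous. -/
theorem stmt14 :
    @Continuous TreeSpace (Set (ℕ → Bool)) _ vietorisTop
      (fun T => MT {l : List ℕ+ | T.1 l = true}) := by
  refine continuous_generateFrom_iff.2 ?_
  rintro s (⟨η, rfl⟩ | ⟨η, rfl⟩)
  · exact (isClopen_setOf_MT_inter_cyl_nonempty η).isOpen
  · convert (isClopen_setOf_MT_inter_cyl_nonempty η).compl.isOpen using 1
    ext T
    simp [not_nonempty_iff_eq_empty]
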